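/- arXiv:2010.08927 — 2 statements merged into one kernel-verified Lean document; each statement's English description precedes it below -/
import Mathlib

section
/- Let k be a field of characteristic zero and F a monic polynomial of degree d over k with roots in an algebraic closure. Then F has exactly l distinct roots in the algebraic closure if and only if the generalized discriminants satisfy D_1 = ⋯ = D_{d-l} = 0 and D_{d-l+1} ≠ 0. -/
/-!
A squared Vandermonde product over a set of indices vanishes as soon as two of the chosen roots
coincide, so `D_{d+1-n} = 0` whenever `n` exceeds the number `c` of distinct roots. For `n = c`
the surviving subsets are exactly the transversals of the fibres of `ξ`, and each of them
contributes the same value `±∏_{a ≠ b} (b - a)`, taken over the distinct roots `a, b`. Hence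
`D_{d+1-c}` is a positive integer multiple of a nonzero element, which is nonzero in
characteristic zero.
-/

open Finset Polynomial Classical

/-- Squared Vandermonde product over a subset of root indices. -/
noncomputable def vanderSq {K : Type*} [CommRing K] {d : ℕ} (ξ : Fin d → K)
    (s : Finset (Fin d)) : K :=
  ∏ p ∈ (s ×ˢ s).filter (fun p => p.1 < p.2), (ξ p.2 - ξ p.1) ^ 2

/-- The generalized discriminant `D_{d+1-l}` in terms of the roots: the sum over all
`l`-element subsets of the roots of the squared Vandermonde product. -/
noncomputable def genDiscRoots {K : Type*} [CommRing K] {d : ℕ} (ξ : Fin d → K)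
    (l : ℕ) : K :=
  ∑ s ∈ Finset.powersetCard l (Finset.univ : Finset (Fin d)), vanderSq ξ s

namespace Finset

variable {α β : Type*} [DecidableEq β]

lemma offDiag_image_of_injOn {f : α → β} {s : Finset α} (hf : Set.InjOn f s) :
    (s.image f).offDiag = s.offDiag.image (Prod.map f f) := by
  ext ⟨a, b⟩
  simp only [mem_offDiag, mem_image, Prod.exists, Prod.map, Prod.mk.injEq]
  constructor
  · rintro ⟨⟨i, hi, rfl⟩, ⟨j, hj, rfl⟩, hne⟩
    exact ⟨i, j, ⟨hi, hj, fun h => hne (h ▸ rfl)⟩, rfl, rfl⟩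
  · rintro ⟨i, j, ⟨hi, hj, hne⟩, rfl, rfl⟩
    exact ⟨⟨i, hi, rfl⟩, ⟨j, hj, rfl⟩, fun h => hne (hf hi hj h)⟩

lemma prod_offDiag_image_of_injOn {M : Type*} [CommMonoid M] {f : α → β} {s : Finset α}
    (hf : Set.InjOn f s) (g : β × β → M) :
    ∏ q ∈ (s.image f).offDiag, g q = ∏ p ∈ s.offDiag, g (f p.1, f p.2) := by
  rw [offDiag_image_of_injOn hf, prod_image]
  · rfl
  · rintro p hp q hq hpq
    simp only [coe_offDiag, Set.mem_offDiag, mem_coe] at hp hq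
    exact Prod.ext (hf hp.1 hq.1 congr($hpq.1)) (hf hp.2.1 hq.2.1 congr($hpq.2))

end Finset

section VanderSq

variable {K : Type*} [CommRing K] {d : ℕ} (ξ : Fin d → K)

lemma prod_offDiag_sub_eq_neg_one_pow_mul_vanderSq (s : Finset (Fin d)) :
    ∏ p ∈ s.offDiag, (ξ p.2 - ξ p.1) = (-1) ^ (#s).choose 2 * vanderSq ξ s := by
  have hlt : s.offDiag.filter (fun p => p.1 < p.2) = (s ×ˢ s).filter (fun p => p.1 < p.2) := by
    ext p
    simp only [mem_filter, mem_offDiag, mem_product]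
    exact ⟨fun h => ⟨⟨h.1.1, h.1.2.1⟩, h.2⟩, fun h => ⟨⟨h.1.1, h.1.2, h.2.ne⟩, h.2⟩⟩
  have hswap : ∏ p ∈ s.offDiag.filter (fun p => ¬ p.1 < p.2), (ξ p.2 - ξ p.1) =
      ∏ p ∈ (s ×ˢ s).filter (fun p => p.1 < p.2), (ξ p.1 - ξ p.2) := by
    refine prod_nbij' Prod.swap Prod.swap ?_ ?_ (fun _ _ => rfl) (fun _ _ => rfl) (fun _ _ => rfl)
    all_goals
      intro p hp
      simp only [mem_filter, mem_offDiag, mem_product, Prod.fst_swap, Prod.snd_swap] at hp ⊢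
      grind
  rw [← prod_filter_mul_prod_filter_not s.offDiag (fun p => p.1 < p.2), hlt, hswap,
    ← prod_mul_distrib, vanderSq, ← card_product_filter_lt, ← prod_const, ← prod_mul_distrib]
  exact prod_congr rfl fun _ _ => by ring

lemma vanderSq_eq_zero_of_not_injOn {s : Finset (Fin d)} (h : ¬ Set.InjOn ξ s) :
    vanderSq ξ s = 0 := by
  obtain ⟨i, hi, j, hj, heq, hne⟩ : ∃ i ∈ s, ∃ j ∈ s, ξ i = ξ j ∧ i ≠ j := by
    simpa [Set.InjOn] using h
  have hzero : ∏ p ∈ s.offDiag, (ξ p.2 - ξ p.1) = 0 :=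
    prod_eq_zero (i := (i, j)) (mem_offDiag.2 ⟨hi, hj, hne⟩) (by simp [heq])
  rwa [prod_offDiag_sub_eq_neg_one_pow_mul_vanderSq, (isUnit_neg_one.pow _).mul_right_eq_zero]
    at hzero

lemma vanderSq_eq_of_injOn {s : Finset (Fin d)} (hs : Set.InjOn ξ s) :
    vanderSq ξ s = (-1) ^ (#s).choose 2 * ∏ q ∈ (s.image ξ).offDiag, (q.2 - q.1) := by
  rw [prod_offDiag_image_of_injOn hs, prod_offDiag_sub_eq_neg_one_pow_mul_vanderSq, ← mul_assoc,
    ← pow_add, Even.neg_one_pow ⟨_, rfl⟩, one_mul]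

end VanderSq

section GenDiscRoots

variable {K : Type*} [CommRing K] {d : ℕ} (ξ : Fin d → K)

lemma genDiscRoots_eq_zero_of_card_image_lt {n : ℕ} (hn : #(univ.image ξ) < n) :
    genDiscRoots ξ n = 0 := by
  refine sum_eq_zero fun s hs => vanderSq_eq_zero_of_not_injOn ξ fun hinj => ?_
  have hcard : #(s.image ξ) = n := (card_image_of_injOn hinj).trans (mem_powersetCard.1 hs).2
  have := card_le_card (image_subset_image (subset_univ s) : s.image ξ ⊆ univ.image ξ)
  omega

lemma genDiscRoots_card_image_ne_zero [IsDomain K] [CharZero K] :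
    genDiscRoots ξ #(univ.image ξ) ≠ 0 := by
  set T := univ.image ξ
  set V : K := (-1) ^ (#T).choose 2 * ∏ q ∈ T.offDiag, (q.2 - q.1)
  have hV : V ≠ 0 := mul_ne_zero (pow_ne_zero _ (neg_ne_zero.2 one_ne_zero)) <|
    prod_ne_zero_iff.2 fun q hq => sub_ne_zero.2 (mem_offDiag.1 hq).2.2.symm
  have hterm : ∀ s ∈ powersetCard #T (univ : Finset (Fin d)),
      vanderSq ξ s = if Set.InjOn ξ s then V else 0 := by
    intro s hs
    split_ifs with hinj
    · have hcard := (mem_powersetCard.1 hs).2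
      have himage : s.image ξ = T := eq_of_subset_of_card_le
        (image_subset_image (subset_univ s)) (by rw [card_image_of_injOn hinj, hcard])
      rw [vanderSq_eq_of_injOn ξ hinj, hcard, himage]
    · exact vanderSq_eq_zero_of_not_injOn ξ hinj
  obtain ⟨s₀, -, hs₀, himage⟩ :=
    exists_subset_injOn_image_eq_of_surjOn (Set.univ : Set (Fin d)) T
      (fun y hy => by simpa [T] using hy)
  have hs₀mem : s₀ ∈ (powersetCard #T univ).filter (fun s : Finset (Fin d) => Set.InjOn ξ s) :=
    mem_filter.2 ⟨mem_powersetCard.2 ⟨subset_univ _, himage ▸ (card_image_of_injOn hs₀).symm⟩, hs₀⟩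
  rw [genDiscRoots, sum_congr rfl hterm, sum_ite, sum_const_zero, add_zero, sum_const]
  exact smul_ne_zero (card_ne_zero_of_mem hs₀mem) hV

end GenDiscRoots

theorem exactly_l_distinct_roots_iff_generalized_discriminants_general
    (K : Type*) [Field K] [CharZero K] (d l : ℕ) (hld : l ≤ d)
    (ξ : Fin d → K) :
    (Finset.image ξ Finset.univ).card = l ↔
      (∀ m ∈ Finset.Icc 1 (d - l), genDiscRoots ξ (d + 1 - m) = 0) ∧
        genDiscRoots ξ (d + 1 - (d - l + 1)) ≠ 0 := by
  set c := #(univ.image ξ)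
  have hcd : c ≤ d := card_image_le.trans_eq (card_fin d)
  rw [show d + 1 - (d - l + 1) = l by omega]
  constructor
  · rintro rfl
    refine ⟨fun m hm => genDiscRoots_eq_zero_of_card_image_lt ξ ?_,
      genDiscRoots_card_image_ne_zero ξ⟩
    rw [mem_Icc] at hm
    omega
  · rintro ⟨hzero, hne⟩
    rcases lt_trichotomy c l with hlt | heq | hgt
    · exact absurd (genDiscRoots_eq_zero_of_card_image_lt ξ hlt) hne
    · exact heq
    · have := hzero (d + 1 - c) (mem_Icc.2 ⟨by omega, by omega⟩)
      rw [show d + 1 - (d + 1 - c) = c by omega] at this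
      exact absurd this (genDiscRoots_card_image_ne_zero ξ)

/-- A monic polynomial `F = ∏ (Z - ξᵢ)` of degree `d` over a field of
characteristic zero has exactly `l` distinct roots if and only if the generalized
discriminants satisfy `D_1 = ⋯ = D_{d-l} = 0` and `D_{d-l+1} ≠ 0` (where `D_m` corresponds
to the sum over `(d+1-m)`-element subsets of roots). -/
theorem exactly_l_distinct_roots_iff_generalized_discriminants
    (K : Type*) [Field K] [CharZero K] (d l : ℕ) (hl : 1 ≤ l) (hld : l ≤ d)
    (ξ : Fin d → K) (F : Polynomial K) (hF : F = ∏ i, (X - C (ξ i))) :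
    (Finset.image ξ Finset.univ).card = l ↔
      (∀ m ∈ Finset.Icc 1 (d - l), genDiscRoots ξ (d + 1 - m) = 0) ∧
        genDiscRoots ξ (d + 1 - (d - l + 1)) ≠ 0 :=
  exactly_l_distinct_roots_iff_generalized_discriminants_general K d l hld ξ
end

section
/- Let F be a monic polynomial of degree d over a field k of characteristic zero with exactly l > 1 distinct roots of multiplicities m = (m_1,…,m_l) in an algebraic closure. Then there is a positive rational constant C, depending only on (m_1,…,m_l), such that the generalized discriminant D_{d-l+1} of F equals C times the discriminant of the reduced polynomial F_red = ∏ (Z - η_i), where η_1,…,η_l are the distinct roots of F. -/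
open Finset Polynomial Classical

/-- If a monic polynomial `F` of degree `d` over a characteristic zero field
has exactly `l > 1` distinct roots `η₁, …, η_l` with multiplicities `m = (m₁, …, m_l)`, then
there is a positive rational constant `C`, depending only on `(m₁, …, m_l)`, such that the
generalized discriminant `D_{d-l+1}` of `F` equals `C` times the discriminant
`∏_{i<j} (η_j - η_i)²` of the reduced polynomial `F_red = ∏ (Z - ηᵢ)`. -/
theorem generalized_discriminant_eq_const_mul_disc_reduced
    (l d : ℕ) (hl : 1 < l) (m : Fin l → ℕ) (hm : ∀ j, 0 < m j) (hd : d = ∑ j, m j) :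
    ∃ C : ℚ, 0 < C ∧
      ∀ (K : Type) (_ : Field K) (_ : CharZero K) (ξ : Fin d → K) (η : Fin l → K),
        Function.Injective η →
        (∀ i, ∃ j, ξ i = η j) →
        (∀ j, (Finset.univ.filter (fun i => ξ i = η j)).card = m j) →
        genDiscRoots ξ (d + 1 - (d - l + 1))
          = (C : K) * ∏ p ∈ ((Finset.univ : Finset (Fin l)) ×ˢ Finset.univ).filter
              (fun p => p.1 < p.2), (η p.2 - η p.1) ^ 2 := by
  classical
  refine ⟨∏ j, (m j : ℚ), Finset.prod_pos fun j _ => by exact_mod_cast hm j, ?_⟩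
  intro K _ _ ξ η hη hξ hmult
  have hld : l ≤ d := by
    rw [hd]
    calc l = ∑ _j : Fin l, 1 := by simp
    _ ≤ ∑ j, m j := Finset.sum_le_sum fun j _ => hm j
  have hidx : d + 1 - (d - l + 1) = l := by omega
  rw [hidx]
  have hdpos : 0 < d := by omega
  set c : Fin d → Fin l := fun i => Classical.choose (hξ i) with hcdef
  have hcs : ∀ i, ξ i = η (c i) := fun i => Classical.choose_spec (hξ i)
  have hcu : ∀ i j, ξ i = η j → c i = j := fun i j h => hη ((hcs i).symm.trans h)
  have hfib : ∀ j, (univ.filter fun i => c i = j).card = m j := by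
    intro j
    rw [← hmult j]
    congr 1
    ext i
    simp only [mem_filter, mem_univ, true_and]
    exact ⟨fun h => by rw [hcs i, h], hcu i j⟩
  unfold genDiscRoots
  rw [← Finset.sum_filter_add_sum_filter_not (Finset.powersetCard l univ)
    (fun s => s.image c = univ)]
  have hbad : ∑ s ∈ (Finset.powersetCard l univ).filter (fun s => ¬ s.image c = univ),
      vanderSq ξ s = 0 := by
    apply Finset.sum_eq_zero
    intro s hs
    rw [mem_filter, Finset.mem_powersetCard] at hs
    obtain ⟨⟨-, hcard⟩, hne⟩ := hs
    have hninj : ¬ Set.InjOn c s := by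
      intro hinj
      apply hne
      apply Finset.eq_of_subset_of_card_le (Finset.subset_univ _)
      rw [Finset.card_image_of_injOn hinj, hcard]
      simp
    rw [Set.InjOn] at hninj
    push_neg at hninj
    obtain ⟨a, ha, b, hb, hab, hne'⟩ := hninj
    rw [Finset.mem_coe] at ha hb
    have hzero : ∀ x y : Fin d, x ∈ s → y ∈ s → c x = c y → x < y → vanderSq ξ s = 0 := by
      intro x y hx hy hcxy hlt
      unfold vanderSq
      apply Finset.prod_eq_zero (i := (x, y))
      · simp [Finset.mem_filter, Finset.mem_product, hx, hy, hlt]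
      · rw [hcs y, hcs x, hcxy, sub_self]
        ring
    rcases lt_or_gt_of_ne hne' with h | h
    · exact hzero a b ha hb hab h
    · exact hzero b a hb ha hab.symm h
  have disc := ∏ p ∈ ((univ : Finset (Fin l)) ×ˢ univ).filter (fun p => p.1 < p.2),
      (η p.2 - η p.1) ^ 2
  have hgood : ∀ s ∈ (Finset.powersetCard l univ).filter (fun s => s.image c = univ),
      vanderSq ξ s = ∏ p ∈ ((univ : Finset (Fin l)) ×ˢ univ).filter (fun p => p.1 < p.2),
        (η p.2 - η p.1) ^ 2 := by
    intro s hs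
    rw [mem_filter, Finset.mem_powersetCard] at hs
    obtain ⟨⟨-, hcard⟩, himg⟩ := hs
    have hinj : Set.InjOn c s := by
      rw [← Finset.card_image_iff, himg, hcard]
      simp
    unfold vanderSq
    refine Finset.prod_bij
      (fun p _ => if c p.1 < c p.2 then (c p.1, c p.2) else (c p.2, c p.1)) ?_ ?_ ?_ ?_
    · intro p hp
      rw [mem_filter, Finset.mem_product] at hp
      obtain ⟨⟨h1, h2⟩, hlt⟩ := hp
      have hne : c p.1 ≠ c p.2 := fun h => (ne_of_lt hlt) (hinj h1 h2 h)
      rcases lt_or_gt_of_ne hne with h | h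
      · simp [h]
      · simp [not_lt_of_gt h, h]
    · intro p hp q hq heq
      rw [mem_filter, Finset.mem_product] at hp hq
      obtain ⟨⟨hp1, hp2⟩, hplt⟩ := hp
      obtain ⟨⟨hq1, hq2⟩, hqlt⟩ := hq
      have hpair : ∀ x y : Fin d, x ∈ s → y ∈ s → c x = c y → x = y := fun x y hx hy h =>
        hinj hx hy h
      by_cases h1 : c p.1 < c p.2 <;> by_cases h2 : c q.1 < c q.2 <;>
        simp only [h1, h2, if_true, if_false, if_pos, if_neg, Prod.mk.injEq] at heq
      · exact Prod.ext (hpair _ _ hp1 hq1 heq.1) (hpair _ _ hp2 hq2 heq.2)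
      · have e1 := hpair _ _ hp1 hq2 heq.1
        have e2 := hpair _ _ hp2 hq1 heq.2
        have : q.2 < q.1 := by rw [← e1, ← e2]; exact hplt
        exact absurd hqlt (not_lt_of_gt this)
      · have e1 := hpair _ _ hp2 hq1 heq.1
        have e2 := hpair _ _ hp1 hq2 heq.2
        have : q.2 < q.1 := by rw [← e2, ← e1]; exact hplt
        exact absurd hqlt (not_lt_of_gt this)
      · exact Prod.ext (hpair _ _ hp1 hq1 heq.2) (hpair _ _ hp2 hq2 heq.1)
    · intro q hq
      rw [mem_filter] at hq
      obtain ⟨-, hqlt⟩ := hq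
      have ha : q.1 ∈ s.image c := by rw [himg]; exact mem_univ _
      have hb : q.2 ∈ s.image c := by rw [himg]; exact mem_univ _
      rw [Finset.mem_image] at ha hb
      obtain ⟨a, has, hca⟩ := ha
      obtain ⟨b, hbs, hcb⟩ := hb
      have hab : a ≠ b := fun h => (ne_of_lt hqlt) (by rw [← hca, ← hcb, h])
      rcases lt_or_gt_of_ne hab with h | h
      · refine ⟨(a, b), ?_, ?_⟩
        · rw [mem_filter, Finset.mem_product]; exact ⟨⟨has, hbs⟩, h⟩
        · simp only [hca, hcb, if_pos hqlt]
      · refine ⟨(b, a), ?_, ?_⟩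
        · rw [mem_filter, Finset.mem_product]; exact ⟨⟨hbs, has⟩, h⟩
        · simp only [hca, hcb, if_neg (not_lt_of_gt hqlt)]
    · intro p hp
      rw [hcs p.1, hcs p.2]
      by_cases h : c p.1 < c p.2
      · simp [h]
      · simp only [h, if_false]
        ring
  rw [Finset.sum_congr rfl hgood, hbad, add_zero, Finset.sum_const, nsmul_eq_mul]
  have hcount : ((Finset.powersetCard l univ).filter (fun s => s.image c = univ)).card
      = ∏ j, m j := by
    have hprod : ∏ j, m j = (Fintype.piFinset (fun j => univ.filter fun i => c i = j)).card := by
      rw [Fintype.card_piFinset]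
      exact Finset.prod_congr rfl fun j _ => (hfib j).symm
    rw [hprod]
    set pick : Finset (Fin d) → Fin l → Fin d := fun s j =>
      if h : ∃ i ∈ s, c i = j then Classical.choose h else ⟨0, hdpos⟩ with hpickdef
    have hpick : ∀ s j, (∃ i ∈ s, c i = j) → pick s j ∈ s ∧ c (pick s j) = j := by
      intro s j h
      simp only [hpickdef, dif_pos h]
      exact Classical.choose_spec h
    refine Finset.card_bij' (fun s _ => pick s) (fun f _ => Finset.image f univ) ?_ ?_ ?_ ?_
    · intro s hs
      rw [mem_filter] at hs
      rw [Fintype.mem_piFinset]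
      intro j
      have hex : ∃ i ∈ s, c i = j := by
        have : j ∈ s.image c := by rw [hs.2]; exact mem_univ _
        rwa [Finset.mem_image] at this
      rw [mem_filter]
      exact ⟨mem_univ _, (hpick s j hex).2⟩
    · intro f hf
      rw [Fintype.mem_piFinset] at hf
      have hcf : ∀ j, c (f j) = j := fun j => (mem_filter.mp (hf j)).2
      have hfinj : Function.Injective f := fun a b h => by
        rw [← hcf a, ← hcf b, h]
      rw [mem_filter, Finset.mem_powersetCard]
      refine ⟨⟨Finset.subset_univ _, ?_⟩, ?_⟩
      · rw [Finset.card_image_of_injective _ hfinj, Finset.card_univ, Fintype.card_fin]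
      · rw [Finset.image_image]
        have : (c ∘ f) = id := funext hcf
        rw [this, Finset.image_id]
    · intro s hs
      rw [mem_filter] at hs
      have hex : ∀ j, ∃ i ∈ s, c i = j := by
        intro j
        have : j ∈ s.image c := by rw [hs.2]; exact mem_univ _
        rwa [Finset.mem_image] at this
      have hsub : Finset.image (pick s) univ ⊆ s := by
        intro x hx
        rw [Finset.mem_image] at hx
        obtain ⟨j, -, hj⟩ := hx
        exact hj ▸ (hpick s j (hex j)).1
      have hpinj : Function.Injective (pick s) := fun a b h => by
        rw [← (hpick s a (hex a)).2, ← (hpick s b (hex b)).2, h]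
      apply Finset.eq_of_subset_of_card_le hsub
      rw [Finset.card_image_of_injective _ hpinj, Finset.card_univ, Fintype.card_fin,
        (Finset.mem_powersetCard.mp hs.1).2]
    · intro f hf
      rw [Fintype.mem_piFinset] at hf
      have hcf : ∀ j, c (f j) = j := fun j => (mem_filter.mp (hf j)).2
      funext j
      show pick (Finset.image f univ) j = f j
      have hex : ∃ i ∈ Finset.image f univ, c i = j :=
        ⟨f j, Finset.mem_image_of_mem _ (mem_univ _), hcf j⟩
      obtain ⟨hmem, hcp⟩ := hpick _ j hex
      rw [Finset.mem_image] at hmem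
      obtain ⟨j', -, hj'⟩ := hmem
      have : j' = j := by rw [← hcf j', hj', hcp]
      rw [← hj', this]
  rw [hcount]
  congr 1
  push_cast
  rfl
end
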